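/- arXiv:1608.07708 — 2 statements merged into one kernel-verified Lean document; each statement's English description precedes it below -/
import Mathlib

section
/- The map sending a lax transformation α from K to H to the transformation K ⟶ R H with component at c given by x ↦ (fun d f => α_d ((K.map f) x)) is well defined (its values satisfy the defining inequality of (R H)(c), and its components are monotone and strictly natural), and it is a bijection between lax transformations from K to H and natural transformations K ⟶ R H in [C, PartOrd]. Hence R is right adjoint to the inclusion of [C, PartOrd] into the category of functors and lax transformations. -/
/-!
As in the Yoneda lemma, a natural transformation `β : K ⟶ R H` is determined by the values
`(β_c x) c (𝟙 c)`: naturality gives `(β_d (K.map f x)) d (𝟙 d) = (β_c x) d f`. These values form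
a lax transformation precisely because the families in `R H` satisfy the lax inequality, and
saturating it recovers `β`.
-/

open CategoryTheory

/-- Application of a morphism of `PartOrd` (a bundled monotone map). -/
abbrev pApp {X Y : PartOrd} (f : X ⟶ Y) : X → Y := (show X →o Y from f.hom)

variable {C : Type} [SmallCategory C]

/-- The carrier of `(R H)(c)`: families `φ d : (c ⟶ d) → H.obj d` satisfying
`φ d' (f ≫ g) ≤ H.map g (φ d f)`, ordered pointwise. -/
abbrev RCarrier (H : C ⥤ PartOrd) (c : C) : Type :=
  {φ : ∀ d : C, (c ⟶ d) → H.obj d //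
    ∀ (d d' : C) (f : c ⟶ d) (g : d ⟶ d'), φ d' (f ≫ g) ≤ pApp (H.map g) (φ d f)}

/-- The action of `R H` on morphisms. -/
def RMap (H : C ⥤ PartOrd) {c c' : C} (h : c ⟶ c') (φ : RCarrier H c) : RCarrier H c' :=
  ⟨fun d (f : c' ⟶ d) => φ.1 d (h ≫ f), by
    intro d d' f g
    simpa [Category.assoc] using φ.2 d d' (h ≫ f) g⟩

/-- The functor `R H : C ⥤ PartOrd`. -/
def RFunctor (H : C ⥤ PartOrd) : C ⥤ PartOrd where
  obj c := PartOrd.of (RCarrier H c)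
  map {c c'} h := PartOrd.ofHom (⟨RMap H h, by
    intro φ ψ hle
    exact fun d f => hle d (h ≫ f)⟩ : RCarrier H c →o RCarrier H c')
  map_id := by
    intro c
    apply PartOrd.hom_ext
    apply OrderHom.ext
    funext φ
    apply Subtype.ext
    funext d f
    show φ.1 d (𝟙 c ≫ f) = φ.1 d f
    rw [Category.id_comp]
  map_comp := by
    intro c c' c'' h h'
    apply PartOrd.hom_ext
    apply OrderHom.ext
    funext φ
    apply Subtype.ext
    funext d f
    show φ.1 d ((h ≫ h') ≫ f) = φ.1 d (h ≫ (h' ≫ f))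
    rw [Category.assoc]

/-- A lax transformation from `K` to `H`: monotone components with
`α_{c'} ∘ K.map g ≤ H.map g ∘ α_c` for every `g : c ⟶ c'`. -/
structure LaxTrans (K H : C ⥤ PartOrd) where
  app : ∀ c : C, (K.obj c : Type) →o (H.obj c : Type)
  lax : ∀ {c c' : C} (g : c ⟶ c') (x : K.obj c),
    app c' (pApp (K.map g) x) ≤ pApp (H.map g) (app c x)

/-- Saturation: the natural transformation `K ⟶ R H` induced by a lax transformation,
with component at `c` given by `x ↦ (fun d f => α_d (K.map f x))`. -/
def saturateLax (K H : C ⥤ PartOrd) (α : LaxTrans K H) : K ⟶ RFunctor H where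
  app c := PartOrd.ofHom (⟨fun x : K.obj c =>
      (⟨fun d (f : c ⟶ d) => α.app d (pApp (K.map f) x), by
        intro d d' f g
        show α.app d' (pApp (K.map (f ≫ g)) x) ≤ pApp (H.map g) (α.app d (pApp (K.map f) x))
        rw [K.map_comp]
        exact (α.lax g (pApp (K.map f) x) :)⟩ : RCarrier H c),
      by
        intro x y hxy
        exact fun d f => (α.app d).monotone ((show _ →o _ from (K.map f).hom).monotone hxy)⟩ :
      (K.obj c : Type) →o RCarrier H c)
  naturality := by
    intro c c' h
    apply PartOrd.hom_ext
    apply OrderHom.ext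
    funext x
    apply Subtype.ext
    funext d f
    show α.app d (pApp (K.map f) (pApp (K.map h) x)) = α.app d (pApp (K.map (h ≫ f)) x)
    rw [K.map_comp]
    rfl

namespace LaxTrans

variable {K H : C ⥤ PartOrd}

lemma ext {α α' : LaxTrans K H} (h : ∀ c x, α.app c x = α'.app c x) : α = α' := by
  obtain ⟨app, _⟩ := α
  obtain ⟨app', _⟩ := α'
  congr
  funext c
  exact OrderHom.ext _ _ (funext (h c))

lemma lax_comp (α : LaxTrans K H) {c d d' : C} (f : c ⟶ d) (g : d ⟶ d') (x : K.obj c) :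
    α.app d' (pApp (K.map (f ≫ g)) x) ≤ pApp (H.map g) (α.app d (pApp (K.map f) x)) := by
  rw [K.map_comp]
  exact α.lax g (pApp (K.map f) x)

end LaxTrans

namespace RFunctor

variable {K H : C ⥤ PartOrd}

lemma app_map_apply (β : K ⟶ RFunctor H) {c d : C} (f : c ⟶ d) (x : K.obj c) (e : C)
    (g : d ⟶ e) : (pApp (β.app d) (pApp (K.map f) x)).1 e g = (pApp (β.app c) x).1 e (f ≫ g) :=
  congrArg (fun γ : K.obj c ⟶ (RFunctor H).obj d => (pApp γ x).1 e g) (β.naturality f)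

def evalId (β : K ⟶ RFunctor H) : LaxTrans K H where
  app c := ⟨fun x => (pApp (β.app c) x).1 c (𝟙 c),
    fun _ _ hxy => (show (K.obj c : Type) →o _ from (β.app c).hom).monotone hxy c (𝟙 c)⟩
  lax {c c'} g x := by
    have h := (pApp (β.app c) x).2 c c' (𝟙 c) g
    rw [Category.id_comp] at h
    show (pApp (β.app c') (pApp (K.map g) x)).1 c' (𝟙 c') ≤ _
    rwa [app_map_apply, Category.comp_id]

lemma evalId_saturateLax (α : LaxTrans K H) : evalId (saturateLax K H α) = α :=
  LaxTrans.ext fun c x => by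
    show α.app c (pApp (K.map (𝟙 c)) x) = α.app c x
    rw [K.map_id]
    rfl

lemma saturateLax_evalId (β : K ⟶ RFunctor H) : saturateLax K H (evalId β) = β := by
  ext c x
  apply Subtype.ext
  funext d f
  show (pApp (β.app d) (pApp (K.map f) x)).1 d (𝟙 d) = (pApp (β.app c) x).1 d f
  rw [app_map_apply, Category.comp_id]

end RFunctor

/-- saturation is well defined (its values satisfy the defining inequality
of `R H`, monotonicity and strict naturality being witnessed by `saturateLax`), and it
is a bijection between lax transformations from `K` to `H` and natural transformations
`K ⟶ R H`; hence `R` is right adjoint to the inclusion of `[C, PartOrd]` into the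
category of functors and lax transformations. -/
theorem saturateLax_bijective (K H : C ⥤ PartOrd) :
    (∀ (α : LaxTrans K H) (c : C) (x : K.obj c) (d d' : C) (f : c ⟶ d) (g : d ⟶ d'),
      α.app d' (pApp (K.map (f ≫ g)) x) ≤ pApp (H.map g) (α.app d (pApp (K.map f) x))) ∧
    Function.Bijective (saturateLax K H) :=
  ⟨fun α _ x _ _ f g => α.lax_comp f g x,
    Function.bijective_iff_has_inverse.2 ⟨RFunctor.evalId, RFunctor.evalId_saturateLax,
      RFunctor.saturateLax_evalId⟩⟩
end

section
/- R_W H is a subfunctor of R H (the action of R H on morphisms preserves the W-strictness condition defining R_W H), and the assignment sending α to the transformation with component at c given by x ↦ (fun d f => α_d ((K.map f) x)) is a bijection between lax transformations from K to H that are strict on W and natural transformations K ⟶ R_W H in [C, PartOrd]. -/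
open CategoryTheory

variable {C : Type} [SmallCategory C]

/-- The carrier of `(R_W H)(c)`: elements of `(R H)(c)` that are strict along the class
`W` of morphisms. -/
abbrev RWCarrier (H : C ⥤ PartOrd) (W : ∀ ⦃c c' : C⦄, (c ⟶ c') → Prop) (c : C) : Type :=
  {φ : RCarrier H c // ∀ (d d' : C) (f : c ⟶ d) (g : d ⟶ d'), W g →
    φ.1 d' (f ≫ g) = pApp (H.map g) (φ.1 d f)}

/-- The subfunctor `R_W H : C ⥤ PartOrd` of `R H`, with the same action on morphisms. -/
def RWFunctor (H : C ⥤ PartOrd) (W : ∀ ⦃c c' : C⦄, (c ⟶ c') → Prop) : C ⥤ PartOrd where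
  obj c := PartOrd.of (RWCarrier H W c)
  map {c c'} h := PartOrd.ofHom (⟨fun ψ => ⟨RMap H h ψ.1, by
      intro d d' f g hg
      show ψ.1.1 d' (h ≫ (f ≫ g)) = pApp (H.map g) (ψ.1.1 d (h ≫ f))
      rw [← Category.assoc]
      exact ψ.2 d d' (h ≫ f) g hg⟩, by
    intro ψ ψ' hle
    exact fun d f => hle d (h ≫ f)⟩ : RWCarrier H W c →o RWCarrier H W c')
  map_id := by
    intro c
    apply PartOrd.Hom.ext
    apply OrderHom.ext
    funext ψ
    apply Subtype.ext
    apply Subtype.ext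
    funext d f
    show ψ.1.1 d (𝟙 c ≫ f) = ψ.1.1 d f
    rw [Category.id_comp]
  map_comp := by
    intro c c' c'' h h'
    apply PartOrd.Hom.ext
    apply OrderHom.ext
    funext ψ
    apply Subtype.ext
    apply Subtype.ext
    funext d f
    show ψ.1.1 d ((h ≫ h') ≫ f) = ψ.1.1 d (h ≫ (h' ≫ f))
    rw [Category.assoc]

/-- The property of a lax transformation being strict on a class `W` of morphisms. -/
def LaxTrans.StrictOn {K H : C ⥤ PartOrd} (α : LaxTrans K H)
    (W : ∀ ⦃c c' : C⦄, (c ⟶ c') → Prop) : Prop :=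
  ∀ (c c' : C) (g : c ⟶ c'), W g → ∀ x : K.obj c,
    α.app c' (pApp (K.map g) x) = pApp (H.map g) (α.app c x)

/-- Saturation of a `W`-strict lax transformation, landing in `R_W H`. -/
def saturateLaxW (K H : C ⥤ PartOrd) (W : ∀ ⦃c c' : C⦄, (c ⟶ c') → Prop)
    (α : {α : LaxTrans K H // α.StrictOn W}) : K ⟶ RWFunctor H W where
  app c := PartOrd.ofHom (⟨fun x : K.obj c =>
      (⟨⟨fun d (f : c ⟶ d) => α.1.app d (pApp (K.map f) x), by
        intro d d' f g
        show α.1.app d' (pApp (K.map (f ≫ g)) x) ≤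
          pApp (H.map g) (α.1.app d (pApp (K.map f) x))
        rw [K.map_comp]
        exact α.1.lax g (pApp (K.map f) x)⟩, by
        intro d d' f g hg
        show α.1.app d' (pApp (K.map (f ≫ g)) x) =
          pApp (H.map g) (α.1.app d (pApp (K.map f) x))
        rw [K.map_comp]
        exact α.2 d d' g hg (pApp (K.map f) x)⟩ : RWCarrier H W c),
      by
        intro x y hxy
        exact fun d f => (α.1.app d).monotone ((show _ →o _ from (K.map f).hom).monotone hxy)⟩ :
      (K.obj c : Type) →o RWCarrier H W c)
  naturality := by
    intro c c' h
    apply PartOrd.Hom.ext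
    apply OrderHom.ext
    funext x
    apply Subtype.ext
    apply Subtype.ext
    funext d f
    show α.1.app d (pApp (K.map f) (pApp (K.map h) x)) = α.1.app d (pApp (K.map (h ≫ f)) x)
    rw [K.map_comp]
    rfl

/-! A natural transformation `β : K ⟶ R_W H` is determined by its values at identities: by
naturality, `(β_c x) d f = (β_d (K f x)) d (𝟙 d)`. The components `x ↦ (β_c x) c (𝟙 c)` form a
lax transformation because of the defining inequality of `R H` at `f = 𝟙`, and a `W`-strict one
because of the defining equation of `R_W H`; saturating it gives back `β`. -/

theorem RMap_strict (H : C ⥤ PartOrd) (W : ∀ ⦃c c' : C⦄, (c ⟶ c') → Prop) {c c' : C}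
    (h : c ⟶ c') (ψ : RWCarrier H W c) {d d' : C} (f : c' ⟶ d) (g : d ⟶ d') (hg : W g) :
    (RMap H h ψ.1).1 d' (f ≫ g) = pApp (H.map g) ((RMap H h ψ.1).1 d f) := by
  show ψ.1.1 d' (h ≫ f ≫ g) = pApp (H.map g) (ψ.1.1 d (h ≫ f))
  rw [← Category.assoc]
  exact ψ.2 d d' (h ≫ f) g hg

section Saturation

variable {K H : C ⥤ PartOrd} {W : ∀ ⦃c c' : C⦄, (c ⟶ c') → Prop}

abbrev rwEval (β : K ⟶ RWFunctor H W) {c : C} (x : K.obj c) (d : C) (f : c ⟶ d) : H.obj d :=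
  (pApp (β.app c) x : RWCarrier H W c).1.1 d f

theorem rwEval_map (β : K ⟶ RWFunctor H W) {c c' : C} (h : c ⟶ c') (x : K.obj c)
    (d : C) (f : c' ⟶ d) :
    rwEval β (pApp (K.map h) x) d f = rwEval β x d (h ≫ f) := by
  have hx := congrArg (fun φ : K.obj c ⟶ (RWFunctor H W).obj c' => pApp φ x) (β.naturality h)
  exact congrFun (congrFun (congrArg (fun ψ : RWCarrier H W c' => ψ.1.1) hx) d) f

def evalAtIdLaxW (β : K ⟶ RWFunctor H W) : {α : LaxTrans K H // α.StrictOn W} where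
  val :=
    { app := fun c => ⟨fun x => rwEval β x c (𝟙 c),
        fun _ _ hxy => (β.app c).hom.monotone hxy c (𝟙 c)⟩
      lax := fun {c c'} g x => by
        show rwEval β (pApp (K.map g) x) c' (𝟙 c') ≤ _
        rw [rwEval_map, Category.comp_id]
        have hφ := (pApp (β.app c) x : RWCarrier H W c).1.2 c c' (𝟙 c) g
        rwa [Category.id_comp] at hφ }
  property c c' g hg x := by
    show rwEval β (pApp (K.map g) x) c' (𝟙 c') = _
    rw [rwEval_map, Category.comp_id]
    have hφ := (pApp (β.app c) x : RWCarrier H W c).2 c c' (𝟙 c) g hg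
    rwa [Category.id_comp] at hφ

theorem evalAtIdLaxW_saturateLaxW (α : {α : LaxTrans K H // α.StrictOn W}) :
    evalAtIdLaxW (saturateLaxW K H W α) = α := by
  obtain ⟨⟨app, lax⟩, hα⟩ := α
  apply Subtype.ext
  show LaxTrans.mk _ _ = LaxTrans.mk app lax
  congr 1
  funext c
  ext x
  show app c (pApp (K.map (𝟙 c)) x) = app c x
  rw [K.map_id]
  rfl

theorem saturateLaxW_evalAtIdLaxW (β : K ⟶ RWFunctor H W) :
    saturateLaxW K H W (evalAtIdLaxW β) = β := by
  ext c : 2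
  ext x : 3
  apply Subtype.ext
  apply Subtype.ext
  funext d f
  show rwEval β (pApp (K.map f) x) d (𝟙 d) = rwEval β x d f
  rw [rwEval_map, Category.comp_id]

end Saturation

theorem saturateLaxW_bijective_general (K H : C ⥤ PartOrd)
    (W : ∀ ⦃c c' : C⦄, (c ⟶ c') → Prop) :
    (∀ (c c' : C) (h : c ⟶ c') (ψ : RWCarrier H W c) (d d' : C) (f : c' ⟶ d)
      (g : d ⟶ d'), W g →
      (RMap H h ψ.1).1 d' (f ≫ g) = pApp (H.map g) ((RMap H h ψ.1).1 d f)) ∧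
    Function.Bijective (saturateLaxW K H W) :=
  ⟨fun _ _ h ψ _ _ f g hg => RMap_strict H W h ψ f g hg,
    Function.bijective_iff_has_inverse.mpr
      ⟨evalAtIdLaxW, evalAtIdLaxW_saturateLaxW, saturateLaxW_evalAtIdLaxW⟩⟩

/-- for a class `W` of morphisms containing all identities and closed
under composition, `R_W H` is a subfunctor of `R H` (the action of `R H` preserves
`W`-strictness), and saturation is a bijection between lax transformations `K` to `H`
that are strict on `W` and natural transformations `K ⟶ R_W H`. -/
theorem saturateLaxW_bijective (K H : C ⥤ PartOrd)
    (W : ∀ ⦃c c' : C⦄, (c ⟶ c') → Prop)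
    (hid : ∀ c : C, W (𝟙 c))
    (hcomp : ∀ ⦃c c' c'' : C⦄ (g : c ⟶ c') (g' : c' ⟶ c''), W g → W g' → W (g ≫ g')) :
    (∀ (c c' : C) (h : c ⟶ c') (ψ : RWCarrier H W c) (d d' : C) (f : c' ⟶ d)
      (g : d ⟶ d'), W g →
      (RMap H h ψ.1).1 d' (f ≫ g) = pApp (H.map g) ((RMap H h ψ.1).1 d f)) ∧
    Function.Bijective (saturateLaxW K H W) :=
  saturateLaxW_bijective_general K H W
end
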